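/- arXiv:1910.02589 — 2 statements merged into one kernel-verified Lean document; each statement's English description precedes it below -/
import Mathlib

section
/- Let f₁, f₂ ∈ O_K[x] be distinct monic irreducible polynomials all of whose roots in K̄ have strictly positive valuation, and suppose that neither f₁ nor f₂ is Eisenstein or of degree 1. Then ν_K(Res(f₁,f₂)) ≥ 4. -/
/-! The roots of an irreducible `f` are Galois conjugate, so they share one valuation `e > 0`.
By Vieta, `ν(a₀) = d e`, and every other lower coefficient `aᵢ = ±e_{d-i}(roots)` has positive
valuation, hence valuation `≥ 1` since it lies in `K`. So `f` fails to be Eisenstein only if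
`d e = ν(a₀) ≥ 2`. As distinct irreducible polynomials share no root,
`ν(α - β) ≥ min (e₁, e₂)` for all roots `α` of `f₁` and `β` of `f₂`, and the resultant has
valuation at least `d₁ d₂ min (e₁, e₂) ≥ 4`, using `dᵢ ≥ 2`. -/

open Polynomial

/-- A monic polynomial `f = x^d + a_{d-1}x^{d-1} + ⋯ + a₀ ∈ O_K[x]` is *Eisenstein*
(with respect to the valuation `v` on an algebraic closure `Kbar` of `K`) if
`ν_K(a_i) ≥ 1` for all `i < d` and `ν_K(a₀) = 1`. -/
def IsEisensteinPoly {K Kbar : Type*} [Field K] [Field Kbar] [Algebra K Kbar]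
    (v : Kbar → ℚ) (f : Polynomial K) : Prop :=
  f.Monic ∧
  (∀ i < f.natDegree, f.coeff i ≠ 0 → 1 ≤ v (algebraMap K Kbar (f.coeff i))) ∧
  f.coeff 0 ≠ 0 ∧ v (algebraMap K Kbar (f.coeff 0)) = 1

/-- The valuation of the resultant of two monic polynomials with no common root:
`ν_K(Res(f₁,f₂)) = Σ_{i,j} ν(α_i − β_j)` over the roots `α_i` of `f₁` and `β_j`
of `f₂` in `Kbar` (with multiplicity). -/
noncomputable def resultantVal {K Kbar : Type*} [Field K] [Field Kbar] [Algebra K Kbar]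
    (v : Kbar → ℚ) (f₁ f₂ : Polynomial K) : ℚ :=
  (((f₁.map (algebraMap K Kbar)).roots).map (fun α =>
    (((f₂.map (algebraMap K Kbar)).roots).map (fun β => v (α - β))).sum)).sum

section PartialValuation

variable {L : Type*} [Field L] {v : L → ℚ}

theorem val_one (hv_mul : ∀ x y : L, x ≠ 0 → y ≠ 0 → v (x * y) = v x + v y) : v 1 = 0 := by
  have := hv_mul 1 1 one_ne_zero one_ne_zero
  rw [one_mul] at this
  linarith

theorem val_neg (hv_mul : ∀ x y : L, x ≠ 0 → y ≠ 0 → v (x * y) = v x + v y) {x : L}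
    (hx : x ≠ 0) : v (-x) = v x := by
  have h₁ : v (-1) = 0 := by
    have := hv_mul (-1) (-1) (by simp) (by simp)
    rw [neg_one_mul, neg_neg, val_one hv_mul] at this
    linarith
  rw [← neg_one_mul, hv_mul _ _ (by simp) hx, h₁, zero_add]

theorem val_neg_one_pow (hv_mul : ∀ x y : L, x ≠ 0 → y ≠ 0 → v (x * y) = v x + v y)
    (n : ℕ) : v ((-1) ^ n) = 0 := by
  rcases neg_one_pow_eq_or L n with h | h <;> rw [h]
  · exact val_one hv_mul
  · rw [val_neg hv_mul one_ne_zero, val_one hv_mul]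

theorem val_multiset_prod (hv_mul : ∀ x y : L, x ≠ 0 → y ≠ 0 → v (x * y) = v x + v y)
    {s : Multiset L} (hs : (0 : L) ∉ s) : v s.prod = (s.map v).sum := by
  induction s using Multiset.induction with
  | empty => simpa using val_one hv_mul
  | cons a t ih =>
    rw [Multiset.mem_cons, not_or] at hs
    rw [Multiset.prod_cons, hv_mul _ _ (Ne.symm hs.1) (Multiset.prod_ne_zero hs.2), ih hs.2,
      Multiset.map_cons, Multiset.sum_cons]

theorem val_multiset_prod_of_forall_eq
    (hv_mul : ∀ x y : L, x ≠ 0 → y ≠ 0 → v (x * y) = v x + v y) {s : Multiset L} {e : ℚ}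
    (hs : ∀ x ∈ s, x ≠ 0 ∧ v x = e) : v s.prod = Multiset.card s * e := by
  rw [val_multiset_prod hv_mul fun h => (hs 0 h).1 rfl,
    Multiset.map_congr rfl fun x hx => (hs x hx).2, Multiset.map_const',
    Multiset.sum_replicate, nsmul_eq_mul]

theorem le_val_multiset_sum
    (hv_add : ∀ x y : L, x ≠ 0 → y ≠ 0 → x + y ≠ 0 → min (v x) (v y) ≤ v (x + y))
    {c : ℚ} {s : Multiset L} (h : ∀ x ∈ s, x ≠ 0 → c ≤ v x) (hs : s.sum ≠ 0) :
    c ≤ v s.sum := by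
  induction s using Multiset.induction with
  | empty => simp at hs
  | cons a t ih =>
    have ht : ∀ x ∈ t, x ≠ 0 → c ≤ v x := fun x hx => h x (Multiset.mem_cons_of_mem hx)
    rw [Multiset.sum_cons] at hs ⊢
    by_cases ha : a = 0
    · rw [ha, zero_add] at hs ⊢
      exact ih ht hs
    by_cases hts : t.sum = 0
    · rw [hts, add_zero]
      exact h a (Multiset.mem_cons_self a t) ha
    exact (le_min (h a (Multiset.mem_cons_self a t) ha) (ih ht hts)).trans
      (hv_add a t.sum ha hts hs)

theorem min_le_val_sub (hv_mul : ∀ x y : L, x ≠ 0 → y ≠ 0 → v (x * y) = v x + v y)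
    (hv_add : ∀ x y : L, x ≠ 0 → y ≠ 0 → x + y ≠ 0 → min (v x) (v y) ≤ v (x + y))
    {x y : L} (hx : x ≠ 0) (hy : y ≠ 0) (hxy : x ≠ y) : min (v x) (v y) ≤ v (x - y) := by
  have := hv_add x (-y) hx (neg_ne_zero.mpr hy) (by rwa [← sub_eq_add_neg, sub_ne_zero])
  rwa [val_neg hv_mul hy, ← sub_eq_add_neg] at this

theorem le_val_esymm (hv_mul : ∀ x y : L, x ≠ 0 → y ≠ 0 → v (x * y) = v x + v y)
    (hv_add : ∀ x y : L, x ≠ 0 → y ≠ 0 → x + y ≠ 0 → min (v x) (v y) ≤ v (x + y))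
    {s : Multiset L} {e : ℚ} (hs : ∀ x ∈ s, x ≠ 0 ∧ v x = e) {k : ℕ} (hk : s.esymm k ≠ 0) :
    k * e ≤ v (s.esymm k) := by
  refine le_val_multiset_sum hv_add (fun x hx _ => ?_) hk
  obtain ⟨t, ht, rfl⟩ := Multiset.mem_map.mp hx
  obtain ⟨hts, htk⟩ := Multiset.mem_powersetCard.mp ht
  rw [val_multiset_prod_of_forall_eq hv_mul fun y hy => hs y (Multiset.mem_of_le hts hy), htk]

end PartialValuation

section IrreduciblePolynomial

variable {K L : Type*} [Field K] [Field L] [Algebra K L]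

theorem coeff_zero_ne_zero_of_irreducible {f : K[X]} (hirr : Irreducible f)
    (hdeg : f.natDegree ≠ 1) : f.coeff 0 ≠ 0 := by
  intro h
  apply hdeg
  have := degree_eq_one_of_irreducible_of_root hirr (x := 0) (by
    rwa [IsRoot, ← coeff_zero_eq_eval_zero])
  exact natDegree_eq_of_degree_eq_some this

theorem ne_zero_of_mem_roots_map {f : K[X]} (hirr : Irreducible f) (hdeg : f.natDegree ≠ 1)
    {α : L} (hα : α ∈ (f.map (algebraMap K L)).roots) : α ≠ 0 := by
  rintro rfl
  apply coeff_zero_ne_zero_of_irreducible hirr hdeg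
  have := isRoot_of_mem_roots hα
  rwa [IsRoot, ← coeff_zero_eq_eval_zero, coeff_map, map_eq_zero] at this

theorem aeval_eq_zero_of_mem_roots_map {f : K[X]} {α : L}
    (hα : α ∈ (f.map (algebraMap K L)).roots) : aeval α f = 0 := by
  rw [aeval_def, ← eval_map]
  exact isRoot_of_mem_roots hα

theorem ne_of_mem_roots_map_of_ne {f₁ f₂ : K[X]} (hmon₁ : f₁.Monic) (hmon₂ : f₂.Monic)
    (hirr₁ : Irreducible f₁) (hirr₂ : Irreducible f₂) (hne : f₁ ≠ f₂) {α β : L}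
    (hα : α ∈ (f₁.map (algebraMap K L)).roots) (hβ : β ∈ (f₂.map (algebraMap K L)).roots) :
    α ≠ β := by
  rintro rfl
  apply hne
  rw [minpoly.eq_of_irreducible_of_monic hirr₁ (aeval_eq_zero_of_mem_roots_map hα) hmon₁,
    minpoly.eq_of_irreducible_of_monic hirr₂ (aeval_eq_zero_of_mem_roots_map hβ) hmon₂]

theorem val_eq_of_mem_roots_map [Normal K L] {v : L → ℚ}
    (hv_gal : ∀ (σ : L ≃ₐ[K] L) (x : L), v (σ x) = v x) {f : K[X]} (hmon : f.Monic)
    (hirr : Irreducible f) {α β : L} (hα : α ∈ (f.map (algebraMap K L)).roots)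
    (hβ : β ∈ (f.map (algebraMap K L)).roots) : v α = v β := by
  have hf : f = minpoly K β :=
    minpoly.eq_of_irreducible_of_monic hirr (aeval_eq_zero_of_mem_roots_map hβ) hmon
  obtain ⟨σ, hσ⟩ := minpoly.exists_algEquiv_of_root (Algebra.IsAlgebraic.isAlgebraic β)
    (hf ▸ aeval_eq_zero_of_mem_roots_map hα)
  rw [← hσ, hv_gal]

end IrreduciblePolynomial

section Coefficients

variable {K L : Type*} [Field K] [Field L] [Algebra K L] {v : L → ℚ} {f : K[X]} {e : ℚ}

theorem val_coeff_zero_eq_natDegree_mul (hv_mul : ∀ x y : L, x ≠ 0 → y ≠ 0 → v (x * y) = v x + v y)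
    (hmon : f.Monic) (hsplit : (f.map (algebraMap K L)).Splits)
    (hroots : ∀ α ∈ (f.map (algebraMap K L)).roots, α ≠ 0 ∧ v α = e) :
    v (algebraMap K L (f.coeff 0)) = f.natDegree * e := by
  rw [← coeff_map, hsplit.coeff_zero_eq_prod_roots_of_monic (hmon.map _),
    hv_mul _ _ (pow_ne_zero _ (neg_ne_zero.mpr one_ne_zero))
      (Multiset.prod_ne_zero fun h => (hroots 0 h).1 rfl),
    val_neg_one_pow hv_mul, val_multiset_prod_of_forall_eq hv_mul hroots,
    ← hsplit.natDegree_eq_card_roots, natDegree_map, zero_add]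

theorem le_val_coeff (hv_mul : ∀ x y : L, x ≠ 0 → y ≠ 0 → v (x * y) = v x + v y)
    (hv_add : ∀ x y : L, x ≠ 0 → y ≠ 0 → x + y ≠ 0 → min (v x) (v y) ≤ v (x + y))
    (hmon : f.Monic) (hsplit : (f.map (algebraMap K L)).Splits)
    (hroots : ∀ α ∈ (f.map (algebraMap K L)).roots, α ≠ 0 ∧ v α = e) {i : ℕ}
    (hi : i ≤ f.natDegree) (hc : f.coeff i ≠ 0) :
    ((f.natDegree - i : ℕ) : ℚ) * e ≤ v (algebraMap K L (f.coeff i)) := by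
  have hvieta := coeff_eq_esymm_roots_of_splits hsplit (k := i) (by rwa [natDegree_map])
  rw [coeff_map, (hmon.map _).leadingCoeff, one_mul, natDegree_map] at hvieta
  have hesymm : (f.map (algebraMap K L)).roots.esymm (f.natDegree - i) ≠ 0 := by
    intro h
    rw [h, mul_zero, map_eq_zero] at hvieta
    exact hc hvieta
  rw [hvieta, hv_mul _ _ (pow_ne_zero _ (neg_ne_zero.mpr one_ne_zero)) hesymm,
    val_neg_one_pow hv_mul, zero_add]
  exact le_val_esymm hv_mul hv_add hroots hesymm

theorem one_le_val_of_pos (hv_int : ∀ x : K, x ≠ 0 → ∃ n : ℤ, v (algebraMap K L x) = (n : ℚ))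
    {x : K} (hx : x ≠ 0) (hpos : 0 < v (algebraMap K L x)) : 1 ≤ v (algebraMap K L x) := by
  obtain ⟨n, hn⟩ := hv_int x hx
  rw [hn] at hpos ⊢
  exact_mod_cast (show (0 : ℤ) < n by exact_mod_cast hpos)

theorem two_le_natDegree_mul_of_not_isEisensteinPoly
    (hv_mul : ∀ x y : L, x ≠ 0 → y ≠ 0 → v (x * y) = v x + v y)
    (hv_add : ∀ x y : L, x ≠ 0 → y ≠ 0 → x + y ≠ 0 → min (v x) (v y) ≤ v (x + y))
    (hv_int : ∀ x : K, x ≠ 0 → ∃ n : ℤ, v (algebraMap K L x) = (n : ℚ))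
    (hmon : f.Monic) (hsplit : (f.map (algebraMap K L)).Splits)
    (hroots : ∀ α ∈ (f.map (algebraMap K L)).roots, α ≠ 0 ∧ v α = e) (he : 0 < e)
    (hdeg : f.natDegree ≠ 0) (hc₀ : f.coeff 0 ≠ 0) (hEis : ¬ IsEisensteinPoly v f) :
    2 ≤ f.natDegree * e := by
  have hmid : ∀ i < f.natDegree, f.coeff i ≠ 0 → 1 ≤ v (algebraMap K L (f.coeff i)) :=
    fun i hi hc => one_le_val_of_pos hv_int hc <| lt_of_lt_of_le
      (mul_pos (by exact_mod_cast Nat.sub_pos_of_lt hi) he)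
      (le_val_coeff hv_mul hv_add hmon hsplit hroots hi.le hc)
  have hval₀ := val_coeff_zero_eq_natDegree_mul hv_mul hmon hsplit hroots
  have hpos₀ : 0 < v (algebraMap K L (f.coeff 0)) := by
    rw [hval₀]
    exact mul_pos (by exact_mod_cast Nat.pos_of_ne_zero hdeg) he
  have hne₀ : v (algebraMap K L (f.coeff 0)) ≠ 1 := fun h => hEis ⟨hmon, hmid, hc₀, h⟩
  have hone₀ := one_le_val_of_pos hv_int hc₀ hpos₀
  obtain ⟨n, hn⟩ := hv_int _ hc₀
  rw [hn] at hone₀ hne₀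
  rw [← hval₀, hn]
  have : (1 : ℤ) ≤ n := by exact_mod_cast hone₀
  have : n ≠ 1 := by exact_mod_cast hne₀
  exact_mod_cast (show (2 : ℤ) ≤ n by omega)

end Coefficients

theorem exists_val_roots_eq_of_not_isEisensteinPoly {K L : Type*} [Field K] [Field L]
    [Algebra K L] [IsAlgClosure K L] {v : L → ℚ}
    (hv_mul : ∀ x y : L, x ≠ 0 → y ≠ 0 → v (x * y) = v x + v y)
    (hv_add : ∀ x y : L, x ≠ 0 → y ≠ 0 → x + y ≠ 0 → min (v x) (v y) ≤ v (x + y))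
    (hv_gal : ∀ (σ : L ≃ₐ[K] L) (x : L), v (σ x) = v x)
    (hv_int : ∀ x : K, x ≠ 0 → ∃ n : ℤ, v (algebraMap K L x) = (n : ℚ))
    {f : K[X]} (hmon : f.Monic) (hirr : Irreducible f) (hdeg : f.natDegree ≠ 1)
    (hpos : ∀ α ∈ (f.map (algebraMap K L)).roots, 0 < v α) (hEis : ¬ IsEisensteinPoly v f) :
    ∃ e : ℚ, 0 < e ∧ (∀ α ∈ (f.map (algebraMap K L)).roots, α ≠ 0 ∧ v α = e) ∧
      2 ≤ f.natDegree * e := by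
  have hsplit : (f.map (algebraMap K L)).Splits := (IsAlgClosure.isAlgClosed K).splits _
  obtain ⟨α₀, hα₀⟩ : ∃ α₀, α₀ ∈ (f.map (algebraMap K L)).roots := by
    rw [← Multiset.card_pos_iff_exists_mem, ← hsplit.natDegree_eq_card_roots, natDegree_map]
    exact hirr.natDegree_pos
  have hroots : ∀ α ∈ (f.map (algebraMap K L)).roots, α ≠ 0 ∧ v α = v α₀ := fun α hα =>
    ⟨ne_zero_of_mem_roots_map hirr hdeg hα, val_eq_of_mem_roots_map hv_gal hmon hirr hα hα₀⟩
  exact ⟨v α₀, hpos α₀ hα₀, hroots, two_le_natDegree_mul_of_not_isEisensteinPoly hv_mul hv_add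
    hv_int hmon hsplit hroots (hpos α₀ hα₀) hirr.natDegree_pos.ne'
    (coeff_zero_ne_zero_of_irreducible hirr hdeg) hEis⟩

theorem mul_card_roots_le_resultantVal {K L : Type*} [Field K] [Field L] [Algebra K L]
    {v : L → ℚ} {f₁ f₂ : K[X]} {c : ℚ}
    (h : ∀ α ∈ (f₁.map (algebraMap K L)).roots, ∀ β ∈ (f₂.map (algebraMap K L)).roots,
      c ≤ v (α - β)) :
    Multiset.card (f₁.map (algebraMap K L)).roots *
      (Multiset.card (f₂.map (algebraMap K L)).roots * c) ≤ resultantVal v f₁ f₂ := by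
  have hinner : ∀ α ∈ (f₁.map (algebraMap K L)).roots,
      Multiset.card (f₂.map (algebraMap K L)).roots * c ≤
        ((f₂.map (algebraMap K L)).roots.map fun β => v (α - β)).sum := by
    intro α hα
    have := Multiset.card_nsmul_le_sum (a := c)
      (s := (f₂.map (algebraMap K L)).roots.map fun β => v (α - β)) (Multiset.forall_mem_map_iff.mpr (h α hα))
    rwa [Multiset.card_map, nsmul_eq_mul] at this
  have := Multiset.card_nsmul_le_sum (Multiset.forall_mem_map_iff.mpr hinner)
  rwa [Multiset.card_map, nsmul_eq_mul] at this

theorem resultant_val_ge_four_general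
    {K Kbar : Type*} [Field K] [Field Kbar] [Algebra K Kbar] [IsAlgClosure K Kbar]
    (v : Kbar → ℚ)
    (hv_mul : ∀ x y : Kbar, x ≠ 0 → y ≠ 0 → v (x * y) = v x + v y)
    (hv_add : ∀ x y : Kbar, x ≠ 0 → y ≠ 0 → x + y ≠ 0 → min (v x) (v y) ≤ v (x + y))
    (hv_gal : ∀ (σ : Kbar ≃ₐ[K] Kbar) (x : Kbar), v (σ x) = v x)
    (hv_int : ∀ x : K, x ≠ 0 → ∃ n : ℤ, v (algebraMap K Kbar x) = (n : ℚ))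
    (f₁ f₂ : Polynomial K)
    (hmon₁ : f₁.Monic) (hmon₂ : f₂.Monic)
    (hirr₁ : Irreducible f₁) (hirr₂ : Irreducible f₂)
    (hne : f₁ ≠ f₂)
    (hpos₁ : ∀ α ∈ (f₁.map (algebraMap K Kbar)).roots, 0 < v α)
    (hpos₂ : ∀ β ∈ (f₂.map (algebraMap K Kbar)).roots, 0 < v β)
    (hf₁ : ¬ IsEisensteinPoly v f₁) (hdeg₁ : f₁.natDegree ≠ 1)
    (hf₂ : ¬ IsEisensteinPoly v f₂) (hdeg₂ : f₂.natDegree ≠ 1) :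
    4 ≤ resultantVal v f₁ f₂ := by
  obtain ⟨e₁, he₁, hroots₁, hd₁e₁⟩ := exists_val_roots_eq_of_not_isEisensteinPoly hv_mul hv_add
    hv_gal hv_int hmon₁ hirr₁ hdeg₁ hpos₁ hf₁
  obtain ⟨e₂, he₂, hroots₂, hd₂e₂⟩ := exists_val_roots_eq_of_not_isEisensteinPoly hv_mul hv_add
    hv_gal hv_int hmon₂ hirr₂ hdeg₂ hpos₂ hf₂
  have hcard : ∀ f : K[X], Multiset.card (f.map (algebraMap K Kbar)).roots = f.natDegree :=
    fun f => by rw [← ((IsAlgClosure.isAlgClosed K).splits _).natDegree_eq_card_roots,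
      natDegree_map]
  have hd₁ : (2 : ℚ) ≤ f₁.natDegree := by have := hirr₁.natDegree_pos; norm_cast; omega
  have hd₂ : (2 : ℚ) ≤ f₂.natDegree := by have := hirr₂.natDegree_pos; norm_cast; omega
  have hsub : ∀ α ∈ (f₁.map (algebraMap K Kbar)).roots,
      ∀ β ∈ (f₂.map (algebraMap K Kbar)).roots, min e₁ e₂ ≤ v (α - β) := by
    intro α hα β hβ
    rw [← (hroots₁ α hα).2, ← (hroots₂ β hβ).2]
    exact min_le_val_sub hv_mul hv_add (hroots₁ α hα).1 (hroots₂ β hβ).1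
      (ne_of_mem_roots_map_of_ne hmon₁ hmon₂ hirr₁ hirr₂ hne hα hβ)
  calc (4 : ℚ) ≤ f₁.natDegree * (f₂.natDegree * min e₁ e₂) := by
        rcases min_cases e₁ e₂ with ⟨h, -⟩ | ⟨h, -⟩ <;> rw [h] <;> nlinarith
    _ ≤ resultantVal v f₁ f₂ := by
        simpa only [hcard] using mul_card_roots_le_resultantVal hsub

/-- Let `K` be a field, Henselian with respect to a discrete valuation
`ν_K` with algebraically closed residue field, with fixed algebraic closure `Kbar` and
(unique, Galois-invariant) extension `v` of `ν_K`, normalized so that a uniformizer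
`πK` satisfies `v πK = 1` and `v` is `ℤ`-valued on `K`.
Let `f₁, f₂ ∈ O_K[x]` be distinct monic irreducible polynomials all of whose roots in
`Kbar` have strictly positive valuation, and suppose that neither `f₁` nor `f₂` is
Eisenstein or of degree 1.  Then `ν_K(Res(f₁,f₂)) ≥ 4`. -/
theorem resultant_val_ge_four
    {K Kbar : Type*} [Field K] [Field Kbar] [Algebra K Kbar] [IsAlgClosure K Kbar]
    (v : Kbar → ℚ)
    (hv_mul : ∀ x y : Kbar, x ≠ 0 → y ≠ 0 → v (x * y) = v x + v y)
    (hv_add : ∀ x y : Kbar, x ≠ 0 → y ≠ 0 → x + y ≠ 0 → min (v x) (v y) ≤ v (x + y))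
    (hv_gal : ∀ (σ : Kbar ≃ₐ[K] Kbar) (x : Kbar), v (σ x) = v x)
    (hv_int : ∀ x : K, x ≠ 0 → ∃ n : ℤ, v (algebraMap K Kbar x) = (n : ℚ))
    (πK : K) (hπK : πK ≠ 0 ∧ v (algebraMap K Kbar πK) = 1)
    (hv_res : ∀ x : Kbar, x ≠ 0 → 0 ≤ v x →
      ∃ η : K, x = algebraMap K Kbar η ∨ 0 < v (x - algebraMap K Kbar η))
    (f₁ f₂ : Polynomial K)
    (hmon₁ : f₁.Monic) (hmon₂ : f₂.Monic)
    (hirr₁ : Irreducible f₁) (hirr₂ : Irreducible f₂)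
    (hne : f₁ ≠ f₂)
    (hcoeff₁ : ∀ n, f₁.coeff n ≠ 0 → 0 ≤ v (algebraMap K Kbar (f₁.coeff n)))
    (hcoeff₂ : ∀ n, f₂.coeff n ≠ 0 → 0 ≤ v (algebraMap K Kbar (f₂.coeff n)))
    (hpos₁ : ∀ α ∈ (f₁.map (algebraMap K Kbar)).roots, 0 < v α)
    (hpos₂ : ∀ β ∈ (f₂.map (algebraMap K Kbar)).roots, 0 < v β)
    (hf₁ : ¬ IsEisensteinPoly v f₁) (hdeg₁ : f₁.natDegree ≠ 1)
    (hf₂ : ¬ IsEisensteinPoly v f₂) (hdeg₂ : f₂.natDegree ≠ 1) :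
    4 ≤ resultantVal v f₁ f₂ :=
  resultant_val_ge_four_general v hv_mul hv_add hv_gal hv_int f₁ f₂ hmon₁ hmon₂ hirr₁ hirr₂ hne
    hpos₁ hpos₂ hf₁ hdeg₁ hf₂ hdeg₂
end

section
/- Let φ ∈ O_K[x] be monic irreducible and λ ∈ ℚ with λ ≥ 0, and consider the diskoid D(φ,λ) := {γ ∈ K̄ : ν(φ(γ)) ≥ λ}. Let α ∈ K̄ with ν(α) ≥ 0 and let f be the minimal polynomial of α over K. If α ∈ D(φ,λ), then there exists λ′ ∈ ℚ such that D(φ,λ) = D(f,λ′), i.e. {γ ∈ K̄ : ν(φ(γ)) ≥ λ} = {γ ∈ K̄ : ν(f(γ)) ≥ λ′}. -/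
/-!
Extend `v` by `v 0 = ⊤` to a valuation `w`. For `p = minpoly K b` and `γ ∈ K̄`,
`w (p γ) = ∑ w (γ - β)` over the roots `β` of `p`. If `β₁` is a root closest to `γ`, the
ultrametric inequality gives `w (γ - β) = min (w (γ - β₁)) (w (β₁ - β))`, and since `β₁` is
conjugate to `b`, `w (p γ) = ∑ min (E, w (b - β))` with `E = w (γ - β₁)`. As a function of `E`
this is strictly increasing and piecewise affine with rational data, so `lam ≤ w (p γ)` iff
`r ≤ E` for a rational radius `r`: the diskoid `D(p, lam)` is the union of the closed balls of
radius `r` about the roots of `p`. If `α ∈ D(φ, lam)`, then `α` is within `r` of a root of `φ`,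
so by conjugation every root of `φ` is within `r` of a root of `f = minpoly K α` and vice versa;
the two unions of balls coincide, and `lam'` is the level at which the diskoids of `f` have
radius `r`.
-/

open Polynomial Multiset

namespace Diskoid

section TruncSum

variable {Γ : Type*} [AddCommMonoid Γ] [LinearOrder Γ]

def truncSum (c : Multiset Γ) (D : Γ) : Γ :=
  (c.map (min D)).sum

theorem truncSum_cons (x : Γ) (c : Multiset Γ) (D : Γ) :
    truncSum (x ::ₘ c) D = min D x + truncSum c D := by
  simp [truncSum]

theorem truncSum_eq_filter (c : Multiset Γ) (d : Γ) :
    truncSum c d = (c.filter (· < d)).sum + card (c - c.filter (· < d)) • d := by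
  have hsplit := filter_add_not (· < d) c
  have hlt : (c.filter (· < d)).map (min d) = (c.filter (· < d)).map id :=
    map_congr rfl fun x hx => min_eq_right (mem_filter.1 hx).2.le
  have hge : (c.filter (¬ · < d)).map (min d) = (c.filter (¬ · < d)).map fun _ => d :=
    map_congr rfl fun x hx => min_eq_left (not_lt.1 (mem_filter.1 hx).2)
  rw [tsub_eq_of_eq_add_rev hsplit.symm]
  conv_lhs => rw [truncSum, ← hsplit, map_add, Multiset.sum_add, hlt, hge]
  simp

theorem truncSum_top {c : Multiset (WithTop Γ)} (hc : ⊤ ∈ c) : truncSum c ⊤ = ⊤ := by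
  obtain ⟨t, rfl⟩ := exists_cons_of_mem hc
  simp [truncSum_cons]

theorem exists_truncSum_coe_eq (c : Multiset (WithTop Γ)) :
    ∃ c' : Multiset Γ, ∀ d : Γ, truncSum c d = ↑(c.count ⊤ • d + truncSum c' d) := by
  induction c using Multiset.induction_on with
  | empty => exact ⟨0, fun d => by simp [truncSum]⟩
  | cons x t ih =>
    obtain ⟨c', hc'⟩ := ih
    induction x using WithTop.recTopCoe with
    | top =>
      refine ⟨c', fun d => ?_⟩
      rw [truncSum_cons, hc', min_eq_left le_top, ← WithTop.coe_add, count_cons_self, succ_nsmul]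
      congr 1
      abel
    | coe y =>
      refine ⟨y ::ₘ c', fun d => ?_⟩
      rw [truncSum_cons, hc', count_cons_of_ne WithTop.top_ne_coe, truncSum_cons,
        ← WithTop.coe_min, ← WithTop.coe_add]
      congr 1
      abel

variable [IsOrderedAddMonoid Γ]

theorem truncSum_mono (c : Multiset Γ) : Monotone (truncSum c) := fun _ _ h =>
  sum_map_le_sum_map _ _ fun _ _ => min_le_min_right _ h

theorem truncSum_le_of_le {c T : Multiset Γ} (hT : T ≤ c) (d : Γ) :
    truncSum c d ≤ T.sum + card (c - T) • d := by
  conv_lhs => rw [truncSum, ← add_tsub_cancel_of_le hT, map_add, Multiset.sum_add]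
  refine add_le_add ?_ ?_
  · simpa using sum_map_le_sum_map (min d) id fun x _ => min_le_right d x
  · simpa using sum_map_le_sum_map (min d) (fun _ => d) fun x _ => min_le_left d x

end TruncSum

section Threshold

variable {𝕜 : Type*} [Field 𝕜] [LinearOrder 𝕜] [IsStrictOrderedRing 𝕜]

theorem strictMono_nsmul_add_truncSum {m : ℕ} (hm : 0 < m) (c : Multiset 𝕜) :
    StrictMono fun d : 𝕜 => m • d + truncSum c d :=
  (nsmul_right_strictMono hm.ne').add_monotone (truncSum_mono c)

theorem exists_radius_le_nsmul_add_truncSum_iff {m : ℕ} (hm : 0 < m) (c : Multiset 𝕜)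
    (lam : 𝕜) :
    ∃ r : 𝕜, ∀ d, lam ≤ m • d + truncSum c d ↔ r ≤ d := by
  classical
  -- `truncSum c` is the minimum of the affine functions `d ↦ T.sum + card (c - T) • d`, `T ≤ c`
  have key : ∀ d, lam ≤ m • d + truncSum c d ↔
      ∀ T ∈ c.powerset, lam ≤ m • d + (T.sum + card (c - T) • d) := fun d =>
    ⟨fun h T hT => h.trans (add_le_add le_rfl (truncSum_le_of_le (mem_powerset.1 hT) d)),
      fun h => (truncSum_eq_filter c d).symm ▸ h _ (mem_powerset.2 (filter_le _ _))⟩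
  have hne : c.powerset.toFinset.Nonempty := ⟨0, by simp⟩
  refine ⟨c.powerset.toFinset.sup' hne fun T => (lam - T.sum) / (m + card (c - T)),
    fun d => ?_⟩
  rw [key, Finset.sup'_le_iff]
  simp only [mem_toFinset]
  refine forall₂_congr fun T _ => ?_
  have hpos : (0 : 𝕜) < m + card (c - T) := by positivity
  rw [div_le_iff₀ hpos, nsmul_eq_mul, nsmul_eq_mul]
  constructor <;> intro h <;> linarith

theorem exists_radius_coe_le_truncSum_iff {c : Multiset (WithTop 𝕜)} (hc : ⊤ ∈ c) (lam : 𝕜) :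
    ∃ r : 𝕜, ∀ D, (lam : WithTop 𝕜) ≤ truncSum c D ↔ ↑r ≤ D := by
  obtain ⟨c', hc'⟩ := exists_truncSum_coe_eq c
  obtain ⟨r, hr⟩ := exists_radius_le_nsmul_add_truncSum_iff (count_pos.2 hc) c' lam
  refine ⟨r, fun D => ?_⟩
  induction D using WithTop.recTopCoe with
  | top => simp [truncSum_top hc]
  | coe d => rw [hc', WithTop.coe_le_coe, WithTop.coe_le_coe, hr]

theorem exists_level_coe_le_truncSum_iff {c : Multiset (WithTop 𝕜)} (hc : ⊤ ∈ c) (r : 𝕜) :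
    ∃ lam : 𝕜, ∀ D, (lam : WithTop 𝕜) ≤ truncSum c D ↔ ↑r ≤ D := by
  obtain ⟨c', hc'⟩ := exists_truncSum_coe_eq c
  refine ⟨c.count ⊤ • r + truncSum c' r, fun D => ?_⟩
  induction D using WithTop.recTopCoe with
  | top => simp [truncSum_top hc]
  | coe d => rw [hc', WithTop.coe_le_coe, WithTop.coe_le_coe,
      (strictMono_nsmul_add_truncSum (count_pos.2 hc) c').le_iff_le]

end Threshold

end Diskoid

namespace AddValuation

variable {R Γ₀ : Type*} [LinearOrderedAddCommMonoidWithTop Γ₀]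

theorem map_add_eq_min_of_le [Ring R] (w : AddValuation R Γ₀) {x y : R} (h : w (x + y) ≤ w x) :
    w (x + y) = min (w x) (w y) := by
  refine le_antisymm (le_min h ?_) (w.map_add x y)
  simpa [min_eq_left h] using w.map_sub (x + y) x

theorem map_multiset_prod [CommRing R] (w : AddValuation R Γ₀) (s : Multiset R) :
    w s.prod = (s.map w).sum := by
  induction s using Multiset.induction_on with
  | empty => simp
  | cons a s ih => simp [w.map_mul, ih]

theorem map_aeval_eq_sum_aroots {K L : Type*} [Field K] [Field L] [Algebra K L]
    (w : AddValuation L Γ₀) {p : K[X]}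
    (hp : (p.map (algebraMap K L)).Splits) (hm : p.Monic) (γ : L) :
    w (aeval γ p) = ((p.aroots L).map fun β => w (γ - β)).sum := by
  rw [hp.aeval_eq_prod_aroots_of_monic hm, w.map_multiset_prod, Multiset.map_map]
  rfl

end AddValuation

namespace Diskoid

section Conjugates

variable {K L Γ₀ : Type*} [Field K] [Field L] [Algebra K L]
  [LinearOrderedAddCommMonoidWithTop Γ₀]

theorem map_aroots_algEquiv {p : K[X]} (hp : (p.map (algebraMap K L)).Splits) (σ : L ≃ₐ[K] L) :
    (p.aroots L).map σ = p.aroots L := by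
  have h := hp.roots_map (σ : L →+* L)
  rw [Polynomial.map_map, show (σ : L →+* L).comp (algebraMap K L) = algebraMap K L from
    RingHom.ext σ.commutes] at h
  exact h.symm

variable [Normal K L]

theorem self_mem_aroots_minpoly (b : L) : b ∈ (minpoly K b).aroots L :=
  mem_aroots.2 ⟨minpoly.ne_zero (Algebra.IsIntegral.isIntegral b), minpoly.aeval K b⟩

theorem exists_algEquiv_apply_eq_of_mem_aroots {a b : L} (ha : a ∈ (minpoly K b).aroots L) :
    ∃ σ : L ≃ₐ[K] L, σ b = a :=
  minpoly.exists_algEquiv_of_root' (Algebra.IsAlgebraic.isAlgebraic b) (mem_aroots.1 ha).2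

variable (w : AddValuation L Γ₀)

theorem top_mem_map_sub_aroots_minpoly (b : L) :
    ⊤ ∈ ((minpoly K b).aroots L).map fun β => w (b - β) :=
  mem_map.2 ⟨b, self_mem_aroots_minpoly b, by simp⟩

theorem map_sub_aroots_minpoly_eq (hw : ∀ (σ : L ≃ₐ[K] L) x, w (σ x) = w x) {a b : L}
    (ha : a ∈ (minpoly K b).aroots L) :
    ((minpoly K b).aroots L).map (fun β => w (a - β)) =
      ((minpoly K b).aroots L).map fun β => w (b - β) := by
  obtain ⟨σ, rfl⟩ := exists_algEquiv_apply_eq_of_mem_aroots ha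
  conv_lhs => rw [← map_aroots_algEquiv (Normal.splits' b) σ, Multiset.map_map]
  exact map_congr rfl fun β _ => by simp [← map_sub, hw]

theorem exists_map_aeval_minpoly_eq_truncSum (hw : ∀ (σ : L ≃ₐ[K] L) x, w (σ x) = w x)
    (b γ : L) : ∃ β₁ ∈ (minpoly K b).aroots L, (∀ β ∈ (minpoly K b).aroots L,
      w (γ - β) ≤ w (γ - β₁)) ∧ w (aeval γ (minpoly K b)) =
        truncSum (((minpoly K b).aroots L).map fun β => w (b - β)) (w (γ - β₁)) := by
  classical
  obtain ⟨β₁, hβ₁, hmax⟩ := ((minpoly K b).aroots L).toFinset.exists_max_image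
    (fun β => w (γ - β)) ⟨b, mem_toFinset.2 (self_mem_aroots_minpoly b)⟩
  simp only [mem_toFinset] at hβ₁ hmax
  refine ⟨β₁, hβ₁, hmax, ?_⟩
  rw [w.map_aeval_eq_sum_aroots (Normal.splits' b)
    (minpoly.monic (Algebra.IsIntegral.isIntegral b)), truncSum,
    ← map_sub_aroots_minpoly_eq w hw hβ₁, Multiset.map_map]
  refine congrArg _ (map_congr rfl fun β hβ => ?_)
  simpa using w.map_add_eq_min_of_le (x := γ - β₁) (y := β₁ - β) (by simpa using hmax β hβ)

theorem le_map_aeval_minpoly_iff (hw : ∀ (σ : L ≃ₐ[K] L) x, w (σ x) = w x) {b : L}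
    {lam r : Γ₀} (hr : ∀ D, lam ≤ truncSum (((minpoly K b).aroots L).map fun β => w (b - β)) D ↔
      r ≤ D) (γ : L) :
    lam ≤ w (aeval γ (minpoly K b)) ↔ ∃ β ∈ (minpoly K b).aroots L, r ≤ w (γ - β) := by
  obtain ⟨β₁, hβ₁, hmax, heq⟩ := exists_map_aeval_minpoly_eq_truncSum w hw b γ
  rw [heq, hr]
  exact ⟨fun h => ⟨β₁, hβ₁, h⟩, fun ⟨β, hβ, h⟩ => h.trans (hmax β hβ)⟩

theorem exists_mem_aroots_le_of_exists (hw : ∀ (σ : L ≃ₐ[K] L) x, w (σ x) = w x) {α β γ : L}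
    {r : Γ₀} (hαβ : r ≤ w (α - β)) (h : ∃ a ∈ (minpoly K α).aroots L, r ≤ w (γ - a)) :
    ∃ b ∈ (minpoly K β).aroots L, r ≤ w (γ - b) := by
  obtain ⟨a, ha, hγa⟩ := h
  obtain ⟨σ, rfl⟩ := exists_algEquiv_apply_eq_of_mem_aroots ha
  refine ⟨σ β, map_aroots_algEquiv (Normal.splits' β) σ ▸ mem_map_of_mem σ
    (self_mem_aroots_minpoly β), ?_⟩
  calc r ≤ min (w (γ - σ α)) (w (σ α - σ β)) := le_min hγa (by rwa [← map_sub, hw])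
    _ ≤ w (γ - σ β) := by simpa using w.map_add (γ - σ α) (σ α - σ β)

theorem exists_mem_aroots_le_iff (hw : ∀ (σ : L ≃ₐ[K] L) x, w (σ x) = w x) {α β : L}
    {r : Γ₀} (hαβ : r ≤ w (α - β)) (γ : L) :
    (∃ a ∈ (minpoly K α).aroots L, r ≤ w (γ - a)) ↔
      ∃ b ∈ (minpoly K β).aroots L, r ≤ w (γ - b) :=
  ⟨exists_mem_aroots_le_of_exists w hw hαβ,
    exists_mem_aroots_le_of_exists w hw (by rwa [w.map_sub_swap])⟩

end Conjugates

section ExtendByTop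

variable {L G : Type*} [Ring L] [IsDomain L] [AddCommGroup G] [LinearOrder G]
  [IsOrderedAddMonoid G]

open Classical in
noncomputable def extendByTop (v : L → G)
    (hv_mul : ∀ x y : L, x ≠ 0 → y ≠ 0 → v (x * y) = v x + v y)
    (hv_add : ∀ x y : L, x ≠ 0 → y ≠ 0 → x + y ≠ 0 → min (v x) (v y) ≤ v (x + y)) :
    AddValuation L (WithTop G) :=
  AddValuation.of (fun x => if x = 0 then ⊤ else (v x : WithTop G)) (if_pos rfl)
    (by
      have h := hv_mul 1 1 one_ne_zero one_ne_zero
      rw [mul_one, left_eq_add] at h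
      simp [h])
    (fun x y => by
      by_cases hx : x = 0
      · simp [hx]
      by_cases hy : y = 0
      · simp [hy]
      by_cases hxy : x + y = 0
      · simp [hxy]
      simpa [hx, hy, hxy] using hv_add x y hx hy hxy)
    (fun x y => by
      by_cases hx : x = 0
      · simp [hx]
      by_cases hy : y = 0
      · simp [hy]
      simp [hx, hy, hv_mul x y hx hy])

variable (v : L → G) (hv_mul : ∀ x y : L, x ≠ 0 → y ≠ 0 → v (x * y) = v x + v y)
  (hv_add : ∀ x y : L, x ≠ 0 → y ≠ 0 → x + y ≠ 0 → min (v x) (v y) ≤ v (x + y))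

theorem coe_le_extendByTop_iff (q : G) (x : L) :
    (q : WithTop G) ≤ extendByTop v hv_mul hv_add x ↔ x = 0 ∨ q ≤ v x := by
  by_cases hx : x = 0 <;> simp [extendByTop, hx]

theorem extendByTop_map_algEquiv {K : Type*} [CommRing K] [Algebra K L]
    (hv : ∀ (σ : L ≃ₐ[K] L) x, v (σ x) = v x) (σ : L ≃ₐ[K] L) (x : L) :
    extendByTop v hv_mul hv_add (σ x) = extendByTop v hv_mul hv_add x := by
  by_cases hx : x = 0
  · simp [hx]
  · simp [extendByTop, hx, hv, (map_ne_zero_iff σ σ.injective).2 hx]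

end ExtendByTop

end Diskoid

open Diskoid

theorem diskoid_recenter_general
    {K Kbar : Type*} [Field K] [Field Kbar] [Algebra K Kbar] [IsAlgClosure K Kbar]
    (v : Kbar → ℚ)
    (hv_mul : ∀ x y : Kbar, x ≠ 0 → y ≠ 0 → v (x * y) = v x + v y)
    (hv_add : ∀ x y : Kbar, x ≠ 0 → y ≠ 0 → x + y ≠ 0 → min (v x) (v y) ≤ v (x + y))
    (hv_gal : ∀ (σ : Kbar ≃ₐ[K] Kbar) (x : Kbar), v (σ x) = v x)
    (φ : Polynomial K) (hmon : φ.Monic) (hirr : Irreducible φ)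
    (lam : ℚ)
    (α : Kbar)
    (hmem : Polynomial.aeval α φ = 0 ∨ lam ≤ v (Polynomial.aeval α φ)) :
    ∃ lam' : ℚ,
      {γ : Kbar | Polynomial.aeval γ φ = 0 ∨ lam ≤ v (Polynomial.aeval γ φ)} =
      {γ : Kbar | Polynomial.aeval γ (minpoly K α) = 0 ∨
        lam' ≤ v (Polynomial.aeval γ (minpoly K α))} := by
  set w := extendByTop v hv_mul hv_add
  have hw : ∀ (σ : Kbar ≃ₐ[K] Kbar) x, w (σ x) = w x := extendByTop_map_algEquiv v _ _ hv_gal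
  simp only [← coe_le_extendByTop_iff v hv_mul hv_add] at hmem ⊢
  have : IsAlgClosed Kbar := IsAlgClosure.isAlgClosed K
  obtain ⟨b, hb⟩ := IsAlgClosed.exists_aeval_eq_zero Kbar φ (degree_pos_of_irreducible hirr).ne'
  obtain rfl := minpoly.eq_of_irreducible_of_monic hirr hb hmon
  obtain ⟨r, hr⟩ :=
    exists_radius_coe_le_truncSum_iff (top_mem_map_sub_aroots_minpoly (K := K) w b) lam
  obtain ⟨β, hβ, hαβ⟩ := (le_map_aeval_minpoly_iff w hw hr α).1 hmem
  obtain ⟨lam', hlam'⟩ :=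
    exists_level_coe_le_truncSum_iff (top_mem_map_sub_aroots_minpoly (K := K) w α) r
  have hβb : minpoly K β = minpoly K b := (minpoly.eq_of_irreducible_of_monic hirr
    (mem_aroots.1 hβ).2 hmon).symm
  refine ⟨lam', Set.ext fun γ => ?_⟩
  rw [Set.mem_ofPred_eq, Set.mem_ofPred_eq, le_map_aeval_minpoly_iff w hw hr,
    le_map_aeval_minpoly_iff w hw hlam', ← hβb, exists_mem_aroots_le_iff w hw hαβ]

/-- Let `K` be a field, Henselian with respect to a discrete valuation
`ν_K` with algebraically closed residue field, with fixed algebraic closure `Kbar` and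
(unique, Galois-invariant) extension `v` of `ν_K`, normalized so that a uniformizer
`πK` satisfies `v πK = 1` and `v` is `ℤ`-valued on `K`.
Let `φ ∈ O_K[x]` be monic irreducible and `λ ∈ ℚ` with `λ ≥ 0`, and consider the
diskoid `D(φ,λ) := {γ ∈ Kbar : ν(φ(γ)) ≥ λ}` (a root `γ` of `φ`, having `ν(φ(γ)) = ∞`,
always belongs to it).  Let `α ∈ Kbar` with `ν(α) ≥ 0` and let `f` be the minimal
polynomial of `α` over `K`.  If `α ∈ D(φ,λ)`, then there exists `λ′ ∈ ℚ` such that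
`D(φ,λ) = D(f,λ′)`. -/
theorem diskoid_recenter
    {K Kbar : Type*} [Field K] [Field Kbar] [Algebra K Kbar] [IsAlgClosure K Kbar]
    (v : Kbar → ℚ)
    (hv_mul : ∀ x y : Kbar, x ≠ 0 → y ≠ 0 → v (x * y) = v x + v y)
    (hv_add : ∀ x y : Kbar, x ≠ 0 → y ≠ 0 → x + y ≠ 0 → min (v x) (v y) ≤ v (x + y))
    (hv_gal : ∀ (σ : Kbar ≃ₐ[K] Kbar) (x : Kbar), v (σ x) = v x)
    (hv_int : ∀ x : K, x ≠ 0 → ∃ n : ℤ, v (algebraMap K Kbar x) = (n : ℚ))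
    (πK : K) (hπK : πK ≠ 0 ∧ v (algebraMap K Kbar πK) = 1)
    (hv_res : ∀ x : Kbar, x ≠ 0 → 0 ≤ v x →
      ∃ η : K, x = algebraMap K Kbar η ∨ 0 < v (x - algebraMap K Kbar η))
    (φ : Polynomial K) (hmon : φ.Monic) (hirr : Irreducible φ)
    (hcoeff : ∀ n, φ.coeff n ≠ 0 → 0 ≤ v (algebraMap K Kbar (φ.coeff n)))
    (lam : ℚ) (hlam : 0 ≤ lam)
    (α : Kbar) (hα : α = 0 ∨ 0 ≤ v α)
    (hmem : Polynomial.aeval α φ = 0 ∨ lam ≤ v (Polynomial.aeval α φ)) :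
    ∃ lam' : ℚ,
      {γ : Kbar | Polynomial.aeval γ φ = 0 ∨ lam ≤ v (Polynomial.aeval γ φ)} =
      {γ : Kbar | Polynomial.aeval γ (minpoly K α) = 0 ∨
        lam' ≤ v (Polynomial.aeval γ (minpoly K α))} :=
  diskoid_recenter_general v hv_mul hv_add hv_gal φ hmon hirr lam α hmem
end
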